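/- arXiv:2506.04638 — 3 statements merged into one kernel-verified Lean document; each statement's English description precedes it below -/
import Mathlib

section
/- Let Ω ⊆ ℂ² be open, a, b, c : Ω → ℂ holomorphic, and suppose k := ∂_y b + a·b − c is nonvanishing on Ω. Let u : Ω → ℂ be holomorphic with ∂_x∂_y u + a·∂_x u + b·∂_y u + c·u = 0 on Ω. Define u₋ := ∂_x u + b·u and a₋ := a, b₋ := b − (∂_x k)/k, c₋ := c + ∂_x a − ∂_y b − a·(∂_x k)/k. Then: (i) ∂_x∂_y u₋ + a₋·∂_x u₋ + b₋·∂_y u₋ + c₋·u₋ = 0 on Ω; (ii) the new invariants h₋ := ∂_x a₋ + a₋·b₋ − c₋ and k₋ := ∂_y b₋ + a₋·b₋ − c₋ satisfy h₋ = k and k²·k₋ = (2k − h)·k² − ( k·∂_x∂_y k − (∂_x k)(∂_y k) ), where h := ∂_x a + a·b − c. -/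
/-!
The operator `M = ∂ₓ∂_y + a∂ₓ + b∂_y + c` factors as `(∂_y + a)(∂ₓ + b) - k`, so a solution of
`M u = 0` satisfies `(∂_y + a) u₋ = k u` on `Ω`. Applying `∂ₓ` to this identity and eliminating
`∂ₓ u = u₋ - b u` and `u = (∂_y + a) u₋ / k` gives `M₋ u₋ = 0`. The invariant relations are then
algebraic, once `∂_y (∂ₓ k / k)` is computed by the quotient rule and the mixed partials of `k`
are exchanged.
-/

noncomputable def dX (f : ℂ × ℂ → ℂ) : ℂ × ℂ → ℂ := fun z => fderiv ℂ f z (1, 0)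

noncomputable def dY (f : ℂ × ℂ → ℂ) : ℂ × ℂ → ℂ := fun z => fderiv ℂ f z (0, 1)

open Filter Topology

section PartialDerivatives

variable {f g : ℂ × ℂ → ℂ} {z : ℂ × ℂ}

lemma dX_add (hf : DifferentiableAt ℂ f z) (hg : DifferentiableAt ℂ g z) :
    dX (fun w => f w + g w) z = dX f z + dX g z := by
  simp [dX, fderiv_fun_add hf hg]

lemma dX_mul (hf : DifferentiableAt ℂ f z) (hg : DifferentiableAt ℂ g z) :
    dX (fun w => f w * g w) z = dX f z * g z + f z * dX g z := by
  simp only [dX, fderiv_fun_mul hf hg, add_apply, smul_apply, smul_eq_mul]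
  ring

lemma dY_add (hf : DifferentiableAt ℂ f z) (hg : DifferentiableAt ℂ g z) :
    dY (fun w => f w + g w) z = dY f z + dY g z := by
  simp [dY, fderiv_fun_add hf hg]

lemma dY_sub (hf : DifferentiableAt ℂ f z) (hg : DifferentiableAt ℂ g z) :
    dY (fun w => f w - g w) z = dY f z - dY g z := by
  simp [dY, fderiv_fun_sub hf hg]

lemma dY_mul (hf : DifferentiableAt ℂ f z) (hg : DifferentiableAt ℂ g z) :
    dY (fun w => f w * g w) z = dY f z * g z + f z * dY g z := by
  simp only [dY, fderiv_fun_mul hf hg, add_apply, smul_apply, smul_eq_mul]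
  ring

lemma Filter.EventuallyEq.dX_eq (h : f =ᶠ[𝓝 z] g) : dX f z = dX g z := by
  simp [dX, h.fderiv_eq]

lemma Filter.EventuallyEq.dY_eq (h : f =ᶠ[𝓝 z] g) : dY f z = dY g z := by
  simp [dY, h.fderiv_eq]

lemma dY_div (hf : DifferentiableAt ℂ f z) (hg : DifferentiableAt ℂ g z) (hgz : g z ≠ 0) :
    dY (fun w => f w / g w) z = (dY f z * g z - f z * dY g z) / g z ^ 2 := by
  have hquot : DifferentiableAt ℂ (fun w => f w / g w) z := by fun_prop (disch := exact hgz)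
  have hprod : (fun w => f w / g w * g w) =ᶠ[𝓝 z] f :=
    (hg.continuousAt.eventually_ne hgz).mono fun w hw => div_mul_cancel₀ _ hw
  have h := hprod.dY_eq
  rw [dY_mul hquot hg] at h
  rw [eq_div_iff (pow_ne_zero 2 hgz)]
  linear_combination g z * h - dY g z * div_mul_cancel₀ (f z) hgz

lemma AnalyticAt.dX (hf : AnalyticAt ℂ f z) : AnalyticAt ℂ (dX f) z :=
  (ContinuousLinearMap.apply ℂ ℂ ((1, 0) : ℂ × ℂ)).analyticAt _ |>.comp hf.fderiv

lemma AnalyticAt.dY (hf : AnalyticAt ℂ f z) : AnalyticAt ℂ (dY f) z :=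
  (ContinuousLinearMap.apply ℂ ℂ ((0, 1) : ℂ × ℂ)).analyticAt _ |>.comp hf.fderiv

lemma dX_dY_comm (hf : AnalyticAt ℂ f z) : dX (dY f) z = dY (dX f) z := by
  have hd : DifferentiableAt ℂ (fderiv ℂ f) z := hf.fderiv.differentiableAt
  have hsymm : IsSymmSndFDerivAt ℂ f z := hf.contDiffAt.isSymmSndFDerivAt_of_omega
  unfold dX dY
  simp only [fderiv_clm_apply hd (differentiableAt_const _)]
  simpa using hsymm (1, 0) (0, 1)

end PartialDerivatives

noncomputable def hyperbolicOp (a b c u : ℂ × ℂ → ℂ) : ℂ × ℂ → ℂ :=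
  fun z => dX (dY u) z + a z * dX u z + b z * dY u z + c z * u z

section LaplaceTransformation

variable {Ω : Set (ℂ × ℂ)} {a b c k u : ℂ × ℂ → ℂ} {z : ℂ × ℂ}

lemma hyperbolicOp_factorization (hb : DifferentiableAt ℂ b z) (hu : AnalyticAt ℂ u z) :
    dY (fun w => dX u w + b w * u w) z + a z * (dX u z + b z * u z)
      = hyperbolicOp a b c u z + (dY b z + a z * b z - c z) * u z := by
  rw [dY_add hu.dX.differentiableAt (hb.fun_mul hu.differentiableAt), dY_mul hb hu.differentiableAt,
    ← dX_dY_comm hu]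
  unfold hyperbolicOp
  ring

theorem hyperbolicOp_backwardLaplace_eq_zero (hΩ : IsOpen Ω) (ha : AnalyticOnNhd ℂ a Ω)
    (hb : AnalyticOnNhd ℂ b Ω) (hu : AnalyticOnNhd ℂ u Ω) (hk : DifferentiableAt ℂ k z)
    (hkdef : ∀ w ∈ Ω, k w = dY b w + a w * b w - c w) (hueq : ∀ w ∈ Ω, hyperbolicOp a b c u w = 0)
    (hz : z ∈ Ω) (hkz : k z ≠ 0) :
    hyperbolicOp a (fun w => b w - dX k w / k w)
      (fun w => c w + dX a w - dY b w - a w * (dX k w / k w))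
      (fun w => dX u w + b w * u w) z = 0 := by
  have hv : AnalyticAt ℂ (fun w => dX u w + b w * u w) z :=
    (hu z hz).dX.fun_add ((hb z hz).fun_mul (hu z hz))
  have hfactor : ∀ y ∈ Ω, dY (fun w => dX u w + b w * u w) y + a y * (dX u y + b y * u y)
      = k y * u y := fun y hy => by
    rw [hyperbolicOp_factorization (hb y hy).differentiableAt (hu y hy), hueq y hy, hkdef y hy,
      zero_add]
  have hdX := (Set.EqOn.eventuallyEq_of_mem hfactor (hΩ.mem_nhds hz)).dX_eq
  rw [dX_add hv.dY.differentiableAt ((ha z hz).differentiableAt.fun_mul hv.differentiableAt),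
    dX_mul (ha z hz).differentiableAt hv.differentiableAt,
    dX_mul hk (hu z hz).differentiableAt] at hdX
  unfold hyperbolicOp
  linear_combination hdX + (b z - dX k z / k z) * hfactor z hz
    - u z * div_mul_cancel₀ (dX k z) hkz + (dX u z + b z * u z) * hkdef z hz

lemma sq_mul_dY_dX_div_self (hk : AnalyticAt ℂ k z) (hkz : k z ≠ 0) :
    k z ^ 2 * dY (fun w => dX k w / k w) z = k z * dX (dY k) z - dX k z * dY k z := by
  rw [dY_div hk.dX.differentiableAt hk.differentiableAt hkz, dX_dY_comm hk]
  field_simp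

end LaplaceTransformation

/-- Lemma 2.3 (backward Laplace transformation): if `u` solves `Mu = 0` and the invariant
`k = ∂_y b + ab − c` is nonvanishing, then `u₋ = ∂ₓu + b·u` solves `M₋u₋ = 0` with
`a₋ = a`, `b₋ = b − ∂ₓ log k`, `c₋ = c + ∂ₓa − ∂_y b − a·∂ₓ log k`, and the new
invariants satisfy `h₋ = k` and `k₋ = 2k − h − ∂ₓ∂_y log k` (in bilinear form). -/
theorem stmt_3 (Ω : Set (ℂ × ℂ)) (hΩ : IsOpen Ω)
    (a b c u : ℂ × ℂ → ℂ)
    (ha : AnalyticOnNhd ℂ a Ω) (hb : AnalyticOnNhd ℂ b Ω)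
    (hc : AnalyticOnNhd ℂ c Ω) (hu : AnalyticOnNhd ℂ u Ω)
    (h k : ℂ × ℂ → ℂ)
    (hh : h = fun z => dX a z + a z * b z - c z)
    (hk : k = fun z => dY b z + a z * b z - c z)
    (hne : ∀ z ∈ Ω, k z ≠ 0)
    (hueq : ∀ z ∈ Ω, dX (dY u) z + a z * dX u z + b z * dY u z + c z * u z = 0)
    (uminus aminus bminus cminus hminus kminus : ℂ × ℂ → ℂ)
    (hum : uminus = fun z => dX u z + b z * u z)
    (ham : aminus = a)
    (hbm : bminus = fun z => b z - dX k z / k z)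
    (hcm : cminus = fun z => c z + dX a z - dY b z - a z * (dX k z / k z))
    (hhm : hminus = fun z => dX aminus z + aminus z * bminus z - cminus z)
    (hkm : kminus = fun z => dY bminus z + aminus z * bminus z - cminus z) :
    (∀ z ∈ Ω,
      dX (dY uminus) z + aminus z * dX uminus z + bminus z * dY uminus z
        + cminus z * uminus z = 0) ∧
    (∀ z ∈ Ω,
      hminus z = k z ∧
      (k z)^2 * kminus z
        = (2 * k z - h z) * (k z)^2 - (k z * dX (dY k) z - dX k z * dY k z)) := by
  subst uminus aminus bminus cminus hminus kminus h
  have hkdef (z : ℂ × ℂ) : k z = dY b z + a z * b z - c z := congrFun hk z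
  have hkA : AnalyticOnNhd ℂ k Ω := hk ▸ fun z hz =>
    ((hb z hz).dY.fun_add ((ha z hz).fun_mul (hb z hz))).fun_sub (hc z hz)
  refine ⟨fun z hz => hyperbolicOp_backwardLaplace_eq_zero hΩ ha hb hu
    (hkA z hz).differentiableAt (fun w _ => hkdef w) hueq hz (hne z hz),
    fun z hz => ⟨by simp only [hkdef]; ring, ?_⟩⟩
  have hlogDeriv : DifferentiableAt ℂ (fun w => dX k w / k w) z :=
    ((hkA z hz).dX.div (hkA z hz) (hne z hz)).differentiableAt
  simp only [dY_sub (hb z hz).differentiableAt hlogDeriv]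
  linear_combination -sq_mul_dY_dX_div_self (hkA z hz) (hne z hz) - 2 * k z ^ 2 * hkdef z
end

section
/- Let N ≥ 2, α ∈ ℂ^N, u ∈ ℂ fixed, and Ω := {x ∈ ℂ^N : u + x_k ∈ ℂ∖ℝ_{≤0} for all k}. For β ∈ ℂ^N define φ_β : Ω → ℂ by φ_β(x) = ∏_{k=1}^N (u + x_k)^{β_k} (complex powers). Then for all 1 ≤ p ≠ q ≤ N and x ∈ Ω: (i) (x_p − x_q)·∂_p∂_q φ_α(x) + α_q·∂_p φ_α(x) − α_p·∂_q φ_α(x) = 0 (φ_α satisfies the whole system of Euler–Poisson–Darboux equations); (ii) (x_p − x_q)·∂_q φ_α(x) + α_q·φ_α(x) = α_q·φ_{α + e_p − e_q}(x) (the contiguity relation), where e_p is the p-th standard unit vector and ∂_p = ∂/∂x_p. -/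
/-!
With `φ_β(x) = ∏ₖ (u + xₖ)^{βₖ}`, both identities follow from two pointwise rules on the slit
domain: differentiation lowers one exponent, `∂ₚ φ_β = βₚ · φ_{β - eₚ}`, and raising one exponent
multiplies by the base, `φ_{β + eₚ} = (u + xₚ) · φ_β`. Writing every term over the common factor
`φ_{α - e_q - e_p}` (resp. `φ_{α - e_q}`), identity (i) becomes
`(xₚ - x_q) + (u + x_q) - (u + xₚ) = 0` and (ii) becomes `(xₚ - x_q) + (u + x_q) = u + xₚ`.
-/

/-- Partial derivative of a function on `ℂ^N` with respect to the `p`-th coordinate. -/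
noncomputable def pder {N : ℕ} (p : Fin N) (f : (Fin N → ℂ) → ℂ) : (Fin N → ℂ) → ℂ :=
  fun x => fderiv ℂ f x (Pi.single p (1 : ℂ))

open Complex Finset Filter Topology

noncomputable def gelfandIntegrand {ι : Type*} [Fintype ι] (u : ℂ) (β x : ι → ℂ) : ℂ :=
  ∏ k, (u + x k) ^ β k

section
variable {ι : Type*} [Fintype ι] [DecidableEq ι]

theorem prod_cpow_add_single (z β : ι → ℂ) (p : ι) (c : ℂ) :
    ∏ k, z k ^ (β + Pi.single p c : ι → ℂ) k
      = z p ^ (β p + c) * ∏ k ∈ univ.erase p, z k ^ β k := by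
  rw [← mul_prod_erase _ _ (mem_univ p)]
  congr 1
  · simp
  · refine prod_congr rfl fun k hk => ?_
    simp [ne_of_mem_erase hk]

theorem gelfandIntegrand_add_single (u : ℂ) (β x : ι → ℂ) (p : ι) (hp : u + x p ≠ 0) :
    gelfandIntegrand u (β + Pi.single p 1) x = (u + x p) * gelfandIntegrand u β x := by
  rw [gelfandIntegrand, gelfandIntegrand, prod_cpow_add_single, cpow_add _ _ hp, cpow_one,
    ← mul_prod_erase _ _ (mem_univ p)]
  ring

theorem gelfandIntegrand_sub_single (u : ℂ) (β x : ι → ℂ) (p : ι) :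
    gelfandIntegrand u (β - Pi.single p 1) x
      = (u + x p) ^ (β p - 1) * ∏ k ∈ univ.erase p, (u + x k) ^ β k := by
  rw [sub_eq_add_neg, ← Pi.single_neg, gelfandIntegrand, prod_cpow_add_single, sub_eq_add_neg]

theorem hasFDerivAt_gelfandIntegrand (u : ℂ) (β x : ι → ℂ)
    (hx : ∀ k, u + x k ∈ slitPlane) :
    HasFDerivAt (gelfandIntegrand u β)
      (∑ k, (β k * gelfandIntegrand u (β - Pi.single k 1) x) •
        (ContinuousLinearMap.proj k : (ι → ℂ) →L[ℂ] ℂ)) x := by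
  have hfactor (k : ι) : HasFDerivAt (fun y : ι → ℂ => (u + y k) ^ β k)
      ((β k * (u + x k) ^ (β k - 1)) • (ContinuousLinearMap.proj k : (ι → ℂ) →L[ℂ] ℂ)) x := by
    have hline := ((hasDerivAt_id (x k)).const_add u).cpow_const (c := β k) (hx k)
    refine (hline.hasFDerivAt.comp x
      (ContinuousLinearMap.proj k : (ι → ℂ) →L[ℂ] ℂ).hasFDerivAt).congr_fderiv ?_
    ext v
    simp [mul_comm]
  refine (HasFDerivAt.finsetProd fun k _ => hfactor k).congr_fderiv
    (sum_congr rfl fun k _ => ?_)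
  rw [smul_smul, gelfandIntegrand_sub_single]
  congr 1
  ring

end

theorem pder_gelfandIntegrand {N : ℕ} (u : ℂ) (β x : Fin N → ℂ)
    (hx : ∀ k, u + x k ∈ slitPlane) (p : Fin N) :
    pder p (gelfandIntegrand u β) x = β p * gelfandIntegrand u (β - Pi.single p 1) x := by
  simp [pder, (hasFDerivAt_gelfandIntegrand u β x hx).fderiv, Pi.single_apply]

theorem isOpen_setOf_forall_add_mem_slitPlane {ι : Type*} [Finite ι] (u : ℂ) :
    IsOpen {x : ι → ℂ | ∀ k, u + x k ∈ slitPlane} := by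
  simp only [Set.ofPred_forall]
  exact isOpen_iInter_of_finite fun k => isOpen_slitPlane.preimage (by fun_prop)

theorem pder_gelfandIntegrand_eventuallyEq {N : ℕ} (u : ℂ) (β x : Fin N → ℂ)
    (hx : ∀ k, u + x k ∈ slitPlane) (p : Fin N) :
    pder p (gelfandIntegrand u β) =ᶠ[𝓝 x]
      fun y => β p * gelfandIntegrand u (β - Pi.single p 1) y := by
  filter_upwards [(isOpen_setOf_forall_add_mem_slitPlane u).mem_nhds hx] with y hy
  exact pder_gelfandIntegrand u β y hy p

theorem pder_pder_gelfandIntegrand {N : ℕ} (u : ℂ) (β x : Fin N → ℂ)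
    (hx : ∀ k, u + x k ∈ slitPlane) (p q : Fin N) :
    pder p (pder q (gelfandIntegrand u β)) x
      = β q * (β - Pi.single q 1 : Fin N → ℂ) p *
          gelfandIntegrand u (β - Pi.single q 1 - Pi.single p 1) x := by
  rw [pder, (pder_gelfandIntegrand_eventuallyEq u β x hx q).fderiv_eq,
    fderiv_const_mul (hasFDerivAt_gelfandIntegrand u _ x hx).differentiableAt,
    smul_apply, smul_eq_mul, mul_assoc]
  exact congrArg _ (pder_gelfandIntegrand u _ x hx p)

theorem stmt_11_general {N : ℕ} (α : Fin N → ℂ) (u : ℂ)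
    (φ : (Fin N → ℂ) → (Fin N → ℂ) → ℂ)
    (hφ : ∀ β : Fin N → ℂ, φ β = fun x => ∏ k, (u + x k) ^ (β k)) :
    ∀ p q : Fin N, p ≠ q → ∀ x : Fin N → ℂ,
      (∀ k, u + x k ∈ Complex.slitPlane) →
      ((x p - x q) * pder p (pder q (φ α)) x
          + α q * pder p (φ α) x - α p * pder q (φ α) x = 0) ∧
      ((x p - x q) * pder q (φ α) x + α q * φ α x
          = α q * φ (α + Pi.single p 1 - Pi.single q 1) x) := by
  obtain rfl : φ = gelfandIntegrand u := funext hφ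
  intro p q hpq x hx
  have hp := slitPlane_ne_zero (hx p)
  have hq := slitPlane_ne_zero (hx q)
  have hα : gelfandIntegrand u α x
      = (u + x q) * gelfandIntegrand u (α - Pi.single q 1) x := by
    rw [← gelfandIntegrand_add_single u _ x q hq, sub_add_cancel]
  have hα_add_sub : gelfandIntegrand u (α + Pi.single p 1 - Pi.single q 1) x
      = (u + x p) * gelfandIntegrand u (α - Pi.single q 1) x := by
    rw [← gelfandIntegrand_add_single u _ x p hp, add_sub_right_comm]
  have hα_sub_p : gelfandIntegrand u (α - Pi.single p 1) x
      = (u + x q) * gelfandIntegrand u (α - Pi.single q 1 - Pi.single p 1) x := by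
    rw [← gelfandIntegrand_add_single u _ x q hq, sub_right_comm, sub_add_cancel]
  have hα_sub_q : gelfandIntegrand u (α - Pi.single q 1) x
      = (u + x p) * gelfandIntegrand u (α - Pi.single q 1 - Pi.single p 1) x := by
    rw [← gelfandIntegrand_add_single u _ x p hp, sub_add_cancel]
  constructor
  · rw [pder_pder_gelfandIntegrand u α x hx, pder_gelfandIntegrand u α x hx p,
      pder_gelfandIntegrand u α x hx q, hα_sub_p, hα_sub_q]
    simp only [Pi.sub_apply, Pi.single_eq_of_ne hpq, sub_zero]
    ring
  · rw [pder_gelfandIntegrand u α x hx q, hα, hα_add_sub]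
    ring

/-- Pointwise version of Propositions 3.6 and 3.8: the integrand
`φ_β(x) = ∏_k (u + x_k)^{β_k}` of the restricted Gelfand hypergeometric function satisfies
(i) the Euler–Poisson–Darboux system
`(x_p − x_q)∂_p∂_qφ_α + α_q∂_pφ_α − α_p∂_qφ_α = 0` and
(ii) the contiguity relation `(x_p − x_q)∂_qφ_α + α_q·φ_α = α_q·φ_{α+e_p−e_q}`
on the open set where each `u + x_k` lies in the slit plane. -/
theorem stmt_11 {N : ℕ} (hN : 2 ≤ N) (α : Fin N → ℂ) (u : ℂ)
    (φ : (Fin N → ℂ) → (Fin N → ℂ) → ℂ)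
    (hφ : ∀ β : Fin N → ℂ, φ β = fun x => ∏ k, (u + x k) ^ (β k)) :
    ∀ p q : Fin N, p ≠ q → ∀ x : Fin N → ℂ,
      (∀ k, u + x k ∈ Complex.slitPlane) →
      ((x p - x q) * pder p (pder q (φ α)) x
          + α q * pder p (φ α) x - α p * pder q (φ α) x = 0) ∧
      ((x p - x q) * pder q (φ α) x + α q * φ α x
          = α q * φ (α + Pi.single p 1 - Pi.single q 1) x) :=
  stmt_11_general α u φ hφ
end

section
/- Let N ≥ 2, α ∈ ℂ^N, let Ω ⊆ {x ∈ ℂ^N : x_a ≠ x_b for all a ≠ b} be open, and u : Ω → ℂ holomorphic (twice differentiable). Fix distinct 1 ≤ p, q ≤ N, and set v := (x_p − x_q)·∂_q u + α_q·u (that is, v = L_{p,q}(α)u). Then on Ω: (x_q − x_p)·∂_p v + (α_p + 1)·v = −(x_p − x_q)²·( ∂_p∂_q u + (α_q/(x_p − x_q))·∂_p u + (α_p/(x_q − x_p))·∂_q u ) + (α_p + 1)·α_q·u. In other words, L_{q,p}(α + e_p − e_q)∘L_{p,q}(α) = −(x_p − x_q)²·M_{p,q}(α) + (α_p + 1)·α_q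 as operators on holomorphic functions. -/
section PartialDerivative

variable {N : ℕ} {p : Fin N} {f g : (Fin N → ℂ) → ℂ} {x : Fin N → ℂ}

theorem AnalyticAt.pder (hf : AnalyticAt ℂ f x) (q : Fin N) : AnalyticAt ℂ (_root_.pder q f) x :=
  ((ContinuousLinearMap.apply ℂ ℂ (Pi.single q 1 : Fin N → ℂ)).analyticAt _).comp hf.fderiv

theorem pder_add (hf : DifferentiableAt ℂ f x) (hg : DifferentiableAt ℂ g x) :
    pder p (fun y => f y + g y) x = pder p f x + pder p g x := by
  simp only [pder, fderiv_fun_add hf hg, add_apply]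

theorem pder_mul (hf : DifferentiableAt ℂ f x) (hg : DifferentiableAt ℂ g x) :
    pder p (fun y => f y * g y) x = f x * pder p g x + g x * pder p f x := by
  simp only [pder, fderiv_fun_mul hf hg, add_apply, smul_apply, smul_eq_mul]

theorem pder_const_mul (hf : DifferentiableAt ℂ f x) (c : ℂ) :
    pder p (fun y => c * f y) x = c * pder p f x := by
  simp only [pder, fderiv_const_mul hf c, smul_apply, smul_eq_mul]

theorem pder_sub_coord {q : Fin N} (hpq : p ≠ q) : pder p (fun y => y p - y q) x = 1 := by
  have hD := (hasFDerivAt_apply (𝕜 := ℂ) p x).fun_sub (hasFDerivAt_apply q x)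
  simp [pder, hD.fderiv, Pi.single_eq_of_ne' hpq]

end PartialDerivative

theorem pder_contiguity {N : ℕ} {p q : Fin N} {u : (Fin N → ℂ) → ℂ} {x : Fin N → ℂ}
    (hu : AnalyticAt ℂ u x) (hpq : p ≠ q) (c : ℂ) :
    pder p (fun y => (y p - y q) * pder q u y + c * u y) x
      = (x p - x q) * pder p (pder q u) x + pder q u x + c * pder p u x := by
  have hsub : DifferentiableAt ℂ (fun y : Fin N → ℂ => y p - y q) x := by fun_prop
  have hpdu := (hu.pder q).differentiableAt
  have hprod : DifferentiableAt ℂ (fun y => (y p - y q) * pder q u y) x := hsub.mul hpdu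
  rw [pder_add hprod (hu.differentiableAt.const_mul c),
    pder_mul hsub hpdu, pder_const_mul hu.differentiableAt, pder_sub_coord hpq]
  ring

theorem stmt_14_general {N : ℕ} (α : Fin N → ℂ)
    (Ω : Set (Fin N → ℂ))
    (hΩsub : Ω ⊆ {x | ∀ a b : Fin N, a ≠ b → x a ≠ x b})
    (u : (Fin N → ℂ) → ℂ) (hu : AnalyticOnNhd ℂ u Ω)
    (p q : Fin N) (hpq : p ≠ q)
    (v : (Fin N → ℂ) → ℂ)
    (hv : v = fun x => (x p - x q) * pder q u x + α q * u x) :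
    ∀ x ∈ Ω,
      (x q - x p) * pder p v x + (α p + 1) * v x
        = -(x p - x q)^2 *
            (pder p (pder q u) x + (α q / (x p - x q)) * pder p u x
              + (α p / (x q - x p)) * pder q u x)
          + (α p + 1) * α q * u x := by
  intro x hx
  have hne : x p - x q ≠ 0 := sub_ne_zero.2 (hΩsub hx p q hpq)
  have hne' : x q - x p ≠ 0 := sub_ne_zero.2 (hΩsub hx q p hpq.symm)
  subst hv
  rw [pder_contiguity (hu x hx) hpq]
  field_simp
  ring

/-- Lemma 4.3: with `v = L_{p,q}(α)u = (x_p − x_q)∂_q u + α_q u`, one has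
`L_{q,p}(α+e_p−e_q)v = (x_q − x_p)∂_p v + (α_p+1)v
 = −(x_p − x_q)²·M_{p,q}(α)u + (α_p+1)α_q·u`. -/
theorem stmt_14 {N : ℕ} (hN : 2 ≤ N) (α : Fin N → ℂ)
    (Ω : Set (Fin N → ℂ)) (hΩ : IsOpen Ω)
    (hΩsub : Ω ⊆ {x | ∀ a b : Fin N, a ≠ b → x a ≠ x b})
    (u : (Fin N → ℂ) → ℂ) (hu : AnalyticOnNhd ℂ u Ω)
    (p q : Fin N) (hpq : p ≠ q)
    (v : (Fin N → ℂ) → ℂ)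
    (hv : v = fun x => (x p - x q) * pder q u x + α q * u x) :
    ∀ x ∈ Ω,
      (x q - x p) * pder p v x + (α p + 1) * v x
        = -(x p - x q)^2 *
            (pder p (pder q u) x + (α q / (x p - x q)) * pder p u x
              + (α p / (x q - x p)) * pder q u x)
          + (α p + 1) * α q * u x :=
  stmt_14_general α Ω hΩsub u hu p q hpq v hv
end
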